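/- Let A be a bounded normal operator on a complex Hilbert space and t > 0. Then the point spectrum satisfies σ_p(e^{tA}) = e^{t σ_p(A)} := {e^{tλ} : λ an eigenvalue of A}. -/

import Mathlib

open MeasureTheory intervalIntegral

section aux

variable {H : Type*} [NormedAddCommGroup H] [InnerProductSpace ℂ H] [CompleteSpace H]

local notation "⟪" x ", " y "⟫" => @inner ℂ _ _ x y

/-- If `f` is an eigenvector of `B` with eigenvalue `c`, then it is an eigenvector of
`exp ℂ B` with eigenvalue `Complex.exp c`. -/
lemma exp_apply_eigenvector (B : H →L[ℂ] H) (c : ℂ) (f : H) (h : B f = c • f) :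
    NormedSpace.exp B f = Complex.exp c • f := by
  have hpow : ∀ n : ℕ, (B ^ n) f = c ^ n • f := by
    intro n
    induction n with
    | zero => simp
    | succ n ih =>
      rw [pow_succ, ContinuousLinearMap.mul_apply, h, _root_.map_smul, ih, smul_smul,
        pow_succ]
      ring_nf
  have hsum := NormedSpace.expSeries_summable' (𝕂 := ℂ) B
  have : NormedSpace.exp B f
      = ∑' n : ℕ, ((ContinuousLinearMap.apply ℂ H f) ((n.factorial : ℂ)⁻¹ • B ^ n)) := by
    rw [NormedSpace.exp_eq_tsum ℂ]
    exact ((ContinuousLinearMap.apply ℂ H f).map_tsum hsum)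
  rw [this]
  have heq : ∀ n : ℕ, (ContinuousLinearMap.apply ℂ H f) ((n.factorial : ℂ)⁻¹ • B ^ n)
      = ((n.factorial : ℂ)⁻¹ • c ^ n) • f := by
    intro n
    simp [hpow n, smul_smul]
  rw [tsum_congr heq, Summable.tsum_smul_const]
  · congr 1
    rw [Complex.exp_eq_exp_ℂ, NormedSpace.exp_eq_tsum ℂ]
  · exact (NormedSpace.expSeries_summable' (𝕂 := ℂ) c)

/-- A continuous function on `AddCircle T` all of whose Fourier coefficients vanish
is identically zero. -/
lemma eq_zero_of_fourierCoeff_eq_zero {T : ℝ} [hT : Fact (0 < T)] (G : AddCircle T → ℂ)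
    (hG : Continuous G) (h : ∀ n : ℤ, fourierCoeff G n = 0) : ∀ x, G x = 0 := by
  set Gc : C(AddCircle T, ℂ) := ⟨G, hG⟩ with hGc
  set gL := ContinuousMap.toLp (E := ℂ) 2 (@AddCircle.haarAddCircle T hT) ℂ Gc with hgL
  have hae : (gL : AddCircle T → ℂ) =ᵐ[@AddCircle.haarAddCircle T hT] G :=
    ContinuousMap.coeFn_toLp _ Gc
  have hcoeff : ∀ n : ℤ, fourierCoeff (gL : AddCircle T → ℂ) n = 0 := by
    intro n
    rw [← h n]
    unfold fourierCoeff
    refine integral_congr_ae ?_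
    filter_upwards [hae] with x hx
    rw [hx]
  have hrepr : ∀ n : ℤ, fourierBasis.repr gL n = 0 := by
    intro n
    rw [fourierBasis_repr]
    exact hcoeff n
  have hgL0 : gL = 0 := by
    have : fourierBasis.repr gL = 0 := by
      ext n
      simpa using hrepr n
    simpa using (fourierBasis.repr.map_eq_zero_iff).mp this
  have hGc0 : Gc = 0 := by
    apply ContinuousMap.toLp_injective (𝕜 := ℂ) (p := 2) (@AddCircle.haarAddCircle T hT)
    rw [← hgL, hgL0, map_zero]
  intro x
  have := DFunLike.congr_fun hGc0 x
  simpa [hGc] using this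

end aux

/-- Spectral mapping theorem for the point spectrum of the exponential of a bounded
normal operator on a complex Hilbert space: for `t > 0`,
`σ_p(e^{tA}) = {e^{tλ} : λ ∈ σ_p(A)}`. -/
theorem pointSpectrum_exp_eq_image
    {H : Type*} [NormedAddCommGroup H] [InnerProductSpace ℂ H] [CompleteSpace H]
    (A : H →L[ℂ] H) (hA : IsStarNormal A) (t : ℝ) (ht : 0 < t) :
    {mu : ℂ | ∃ f : H, f ≠ 0 ∧ NormedSpace.exp (t • A) f = mu • f} =
      (fun lam : ℂ => Complex.exp (t * lam)) ''
        {lam : ℂ | ∃ f : H, f ≠ 0 ∧ A f = lam • f} := by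
  ext μ
  simp only [Set.mem_setOf_eq, Set.mem_image]
  constructor
  · -- hard direction
    rintro ⟨f, hf0, hf⟩
    haveI : Fact (0 < t) := ⟨ht⟩
    have htC : (t : ℂ) ≠ 0 := by exact_mod_cast ht.ne'
    -- switch to the real exponential
    have hexpRC : (NormedSpace.exp : (H →L[ℂ] H) → (H →L[ℂ] H)) = NormedSpace.exp :=
      rfl
    set E : ℝ → (H →L[ℂ] H) := fun s => NormedSpace.exp (s • A) with hE
    have hEf : E t f = μ • f := by rw [hE]; simp only; rw [hexpRC]; exact hf
    have hcomm : ∀ s s' : ℝ, Commute (s • A) (s' • A) :=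
      fun s s' => ((Commute.refl A).smul_left s).smul_right s'
    have hEadd : ∀ s s' : ℝ, E (s + s') = E s * E s' := by
      intro s s'
      rw [hE]; simp only
      letI : NormedAlgebra ℚ (H →L[ℂ] H) := .restrictScalars ℚ ℂ _
      rw [add_smul, NormedSpace.exp_add_of_commute (hcomm s s')]
    have hE0 : E 0 = 1 := by rw [hE]; simp [NormedSpace.exp_zero]
    -- μ ≠ 0
    have hμ0 : μ ≠ 0 := by
      intro h
      apply hf0
      have : E (-t) (E t f) = f := by
        have := hEadd (-t) t
        simp only [neg_add_cancel, hE0] at this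
        calc E (-t) (E t f) = (E (-t) * E t) f := rfl
        _ = f := by rw [← this]; simp
      rw [hEf, h, zero_smul, map_zero] at this
      exact this.symm
    -- derivative of E
    have hD : ∀ s : ℝ, HasDerivAt E (A * E s) s := fun s =>
      hasDerivAt_exp_smul_const' (𝕂 := ℝ) A s
    have hEcont : Continuous E :=
      continuous_iff_continuousAt.mpr fun s => (hD s).differentiableAt.continuousAt
    have hEfcont : Continuous fun s => E s f :=
      (ContinuousLinearMap.apply ℂ H f).continuous.comp hEcont
    -- the λ-twisted flows
    set w : ℂ → ℝ → H := fun ν s => Complex.exp (-ν * s) • E s f with hw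
    have hwcont : ∀ ν, Continuous (w ν) := by
      intro ν
      apply Continuous.smul _ hEfcont
      exact Complex.continuous_exp.comp (continuous_const.mul Complex.continuous_ofReal)
    have hwD : ∀ ν s, HasDerivAt (w ν) (A (w ν s) - ν • w ν s) s := by
      intro ν s
      have hc : HasDerivAt (fun s : ℝ => Complex.exp (-ν * s)) (-ν * Complex.exp (-ν * s)) s := by
        have h1 : HasDerivAt (fun z : ℂ => Complex.exp (-ν * z))
            (Complex.exp (-ν * (s : ℂ)) * (-ν)) (s : ℂ) :=
          ((hasDerivAt_id (s : ℂ)).const_mul (-ν)).cexp.congr_deriv (by simp only [id_eq]; ring)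
        simpa [mul_comm] using h1.comp_ofReal
      have hv : HasDerivAt (fun s => E s f) (A (E s f)) s := by
        have := ((ContinuousLinearMap.apply ℂ H f).restrictScalars ℝ).hasFDerivAt.comp_hasDerivAt
          s (hD s)
        simpa [Function.comp_def] using this
      have := hc.smul hv
      -- this : HasDerivAt (fun y => cexp (-ν * y) • E y f)
      --   ((-ν * cexp (-ν s)) • E s f + cexp (-ν s) • A (E s f)) s
      convert this using 1
      · rfl
      rw [hw]; simp only
      rw [_root_.map_smul, smul_smul, mul_comm, ← smul_smul, neg_mul, neg_smul, smul_smul]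
      abel
    -- the candidate eigenvectors
    set I : ℂ → H := fun ν => ∫ s in (0:ℝ)..t, w ν s with hI
    have hwint : ∀ ν, IntervalIntegrable (w ν) volume (0:ℝ) t :=
      fun ν => (hwcont ν).intervalIntegrable _ _
    have heig : ∀ ν : ℂ, Complex.exp (ν * t) = μ → A (I ν) = ν • I ν := by
      intro ν hν
      have hw0 : w ν 0 = f := by rw [hw]; simp [hE0]
      have hwt : w ν t = f := by
        rw [hw]; simp only
        rw [hEf, smul_smul, ← hν, ← Complex.exp_add, neg_mul, neg_add_cancel,
          Complex.exp_zero, one_smul]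
      have hi1 : IntervalIntegrable (fun s => A (w ν s)) volume (0:ℝ) t :=
        (A.continuous.comp (hwcont ν)).intervalIntegrable _ _
      have hi2 : IntervalIntegrable (fun s => ν • w ν s) volume (0:ℝ) t :=
        ((hwcont ν).const_smul ν).intervalIntegrable _ _
      have hFTC : ∫ s in (0:ℝ)..t, (A (w ν s) - ν • w ν s) = w ν t - w ν 0 :=
        integral_eq_sub_of_hasDerivAt (fun s _ => hwD ν s) (hi1.sub hi2)
      rw [hwt, hw0, sub_self] at hFTC
      have hsplit : ∫ s in (0:ℝ)..t, (A (w ν s) - ν • w ν s)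
          = A (I ν) - ν • I ν := by
        rw [integral_sub hi1 hi2]
        rw [A.intervalIntegral_comp_comm (hwint ν), intervalIntegral.integral_smul]
      rw [hsplit] at hFTC
      exact sub_eq_zero.mp hFTC
    -- the family of eigenvalue candidates
    set lam0 : ℂ := Complex.log μ / t with hlam0
    set ν : ℤ → ℂ := fun k => lam0 + 2 * Real.pi * Complex.I * k / t with hν
    have hνexp : ∀ k : ℤ, Complex.exp (ν k * t) = μ := by
      intro k
      have : ν k * t = Complex.log μ + k * (2 * Real.pi * Complex.I) := by
        rw [hν, hlam0]
        field_simp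
      rw [this, Complex.exp_add, Complex.exp_int_mul_two_pi_mul_I, mul_one,
        Complex.exp_log hμ0]
    -- some Fourier coefficient is nonzero
    have hex : ∃ k : ℤ, I (ν k) ≠ 0 := by
      by_contra hcon
      push_neg at hcon
      set g : ℝ → ℂ := fun s => @inner ℂ _ _ f (w lam0 s) with hg
      have hgcont : Continuous g := (innerSL ℂ f).continuous.comp (hwcont lam0)
      have hexplam0 : Complex.exp (lam0 * t) = μ := by
        rw [hlam0, div_mul_cancel₀ _ htC]
        exact Complex.exp_log hμ0
      have hwper : ∀ x : ℝ, w lam0 (x + t) = w lam0 x := by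
        intro x
        rw [hw]; simp only
        have h1 : E (x + t) f = μ • E x f := by
          rw [hEadd x t, ContinuousLinearMap.mul_apply, hEf, _root_.map_smul]
        rw [h1, smul_smul]
        congr 1
        push_cast
        have hone : Complex.exp (-lam0 * (t:ℂ)) * μ = 1 := by
          rw [neg_mul, Complex.exp_neg, hexplam0, inv_mul_cancel₀ hμ0]
        rw [neg_mul, mul_add, neg_add, Complex.exp_add, ← neg_mul, ← neg_mul, mul_assoc,
          hone, mul_one]
      have hgper : Function.Periodic g t := by
        intro x
        rw [hg]; simp only
        rw [hwper x]
      set G : AddCircle t → ℂ := hgper.lift with hG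
      have hGcoe : ∀ x : ℝ, G (x : AddCircle t) = g x := fun x => hgper.lift_coe x
      have hGcont : Continuous G := by
        rw [hG]
        exact (QuotientAddGroup.isQuotientMap_mk _).continuous_iff.mpr hgcont
      -- all Fourier coefficients of G vanish
      have hallzero : ∀ n : ℤ, fourierCoeff G n = 0 := by
        intro n
        rw [fourierCoeff_eq_intervalIntegral G n 0]
        have hinteg : ∀ x : ℝ, @fourier t (-n) (x : AddCircle t) • G (x : AddCircle t)
            = @inner ℂ _ _ f (w (ν n) x) := by
          intro x
          rw [hGcoe x, hg]
          simp only [smul_eq_mul]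
          rw [← inner_smul_right]
          congr 1
          rw [hw]; simp only
          rw [fourier_coe_apply, smul_smul, ← Complex.exp_add]
          congr 2
          rw [hν]
          push_cast
          field_simp
          ring
        have : (∫ x in (0:ℝ)..(0 + t), @fourier t (-n) (x : AddCircle t) • G (x : AddCircle t))
            = ∫ x in (0:ℝ)..t, @inner ℂ _ _ f (w (ν n) x) := by
          rw [zero_add]
          exact intervalIntegral.integral_congr fun x _ => hinteg x
        have h2 : (∫ x in (0:ℝ)..t, @inner ℂ _ _ f (w (ν n) x)) = (innerSL ℂ f) (I (ν n)) :=
          (innerSL ℂ f).intervalIntegral_comp_comm (hwint (ν n))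
        rw [this, h2, hcon n, map_zero, smul_zero]
      -- hence G is identically zero, contradicting G 0 = ⟪f, f⟫ ≠ 0
      have hG0 := eq_zero_of_fourierCoeff_eq_zero G hGcont hallzero ((0:ℝ) : AddCircle t)
      rw [hGcoe 0, hg] at hG0
      simp only at hG0
      have hwz : w lam0 0 = f := by
        rw [hw]; simp [hE0]
      rw [hwz, inner_self_eq_zero] at hG0
      exact hf0 hG0
    obtain ⟨k, hk⟩ := hex
    refine ⟨ν k, ⟨I (ν k), hk, heig (ν k) (hνexp k)⟩, ?_⟩
    rw [mul_comm ((t : ℂ)) (ν k)]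
    exact hνexp k
  · -- easy direction
    rintro ⟨lam, ⟨f, hf0, hf⟩, rfl⟩
    refine ⟨f, hf0, ?_⟩
    apply exp_apply_eigenvector
    rw [ContinuousLinearMap.smul_apply, hf, ← smul_assoc]
    congr 1
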